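/- arXiv:2206.11367 — 4 statements merged into one kernel-verified Lean document; each statement's English description precedes it below -/
import Mathlib

section
/- Let m₁ ≥ 32/3 and m₄ > 0 be real constants, and let ν ∈ ℂ satisfy ν² = -(1/4)(m₁ - 4) (i.e. ν = (1/2)√(m₁-4)·i). Suppose f : ℝ → ℂ is twice differentiable on (0,∞) and satisfies the Bessel differential equation z²·f''(z) + z·f'(z) + (z² − ν²)·f(z) = 0 for all z > 0. Then the function w(t) := t⁻² · f((1/2)·m₄·t²) satisfies the temporal eigenfunction equation w''(t) + 5 t⁻¹ w'(t) + m₁ t⁻² w(t) + m₄² t² w(t) = 0 for all t > 0. -/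
/-!
Writing `w t = t⁻² F t`, the operator `w'' + 5 t⁻¹ w' + m₁ t⁻² w + m₄² t² w` becomes
`t⁻² (F'' + t⁻¹ F' + (m₁ - 4) t⁻² F + m₄² t² F)`. For `F t = f (m₄ t² / 2)` the chain rule gives
`F'' + t⁻¹ F' = 2 m₄ f' + m₄² t² f''`, which is `4 t⁻²` times `z² f'' + z f'` at `z = m₄ t² / 2`;
the Bessel equation turns it into `(4 ν² t⁻² - m₄² t²) F`, and `4 ν² = 4 - m₁` makes the bracket vanish.
-/

open Filter Topology

theorem hasDerivAt_ofReal_pow_inv (n : ℕ) {t : ℝ} (ht : t ≠ 0) :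
    HasDerivAt (fun s : ℝ => ((s : ℂ) ^ n)⁻¹) (-n * ((t : ℂ) ^ (n + 1))⁻¹) t := by
  have ht' : (t : ℂ) ≠ 0 := Complex.ofReal_ne_zero.mpr ht
  refine ((hasDerivAt_pow n (t : ℂ)).inv (pow_ne_zero n ht')).comp_ofReal.congr_deriv ?_
  rcases n with _ | n
  · simp
  · rw [Nat.add_sub_cancel]
    field_simp
    ring

theorem hasDerivAt_inv_sq_mul {g : ℝ → ℂ} {g' : ℂ} {t : ℝ} (ht : t ≠ 0) (hg : HasDerivAt g g' t) :
    HasDerivAt (fun s : ℝ => ((s : ℂ) ^ 2)⁻¹ * g s)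
      (-2 * ((t : ℂ) ^ 3)⁻¹ * g t + ((t : ℂ) ^ 2)⁻¹ * g') t :=
  ((hasDerivAt_ofReal_pow_inv 2 ht).mul hg).congr_deriv (by push_cast; ring)

theorem deriv_deriv_inv_sq_mul_add {g g' : ℝ → ℂ} {g'' : ℂ} {t : ℝ} (ht : t ≠ 0)
    (hg : ∀ᶠ s in 𝓝 t, HasDerivAt g (g' s) s) (hg' : HasDerivAt g' g'' t) :
    deriv (deriv fun s : ℝ => ((s : ℂ) ^ 2)⁻¹ * g s) t
        + 5 * (t : ℂ)⁻¹ * deriv (fun s : ℝ => ((s : ℂ) ^ 2)⁻¹ * g s) t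
      = ((t : ℂ) ^ 2)⁻¹ * (g'' + (t : ℂ)⁻¹ * g' t - 4 * ((t : ℂ) ^ 2)⁻¹ * g t) := by
  have hw' : deriv (fun s : ℝ => ((s : ℂ) ^ 2)⁻¹ * g s)
      =ᶠ[𝓝 t] fun s => -2 * ((s : ℂ) ^ 3)⁻¹ * g s + ((s : ℂ) ^ 2)⁻¹ * g' s := by
    filter_upwards [hg, eventually_ne_nhds ht] with s hs hs0
    exact (hasDerivAt_inv_sq_mul hs0 hs).deriv
  have hw'' : HasDerivAt (fun s : ℝ => -2 * ((s : ℂ) ^ 3)⁻¹ * g s + ((s : ℂ) ^ 2)⁻¹ * g' s) _ t :=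
    (((hasDerivAt_ofReal_pow_inv 3 ht).const_mul (-2)).mul hg.self_of_nhds).add
      ((hasDerivAt_ofReal_pow_inv 2 ht).mul hg')
  rw [hw'.deriv_eq, hw'.eq_of_nhds, hw''.deriv]
  have ht' : (t : ℂ) ≠ 0 := Complex.ofReal_ne_zero.mpr ht
  push_cast
  field_simp
  ring

theorem hasDerivAt_comp_half_mul_sq {E : Type*} [NormedAddCommGroup E] [NormedSpace ℝ E]
    {f : ℝ → E} {f' : E} {c t : ℝ} (hf : HasDerivAt f f' (1 / 2 * c * t ^ 2)) :
    HasDerivAt (fun s => f (1 / 2 * c * s ^ 2)) ((c * t) • f') t :=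
  (hf.scomp t ((hasDerivAt_pow 2 t).const_mul (1 / 2 * c))).congr_deriv (by push_cast; ring_nf)

theorem temporal_eigenfunction_of_bessel_m2_zero_m3_pos_general
    (m₁ m₄ : ℝ) (hm₄ : 0 < m₄)
    (ν : ℂ) (hν : ν ^ 2 = -(1 / 4) * ((m₁ : ℂ) - 4))
    (f : ℝ → ℂ)
    (hf : ∀ z > (0 : ℝ), DifferentiableAt ℝ f z)
    (hf' : ∀ z > (0 : ℝ), DifferentiableAt ℝ (deriv f) z)
    (hBessel : ∀ z > (0 : ℝ),
      (z : ℂ) ^ 2 * deriv (deriv f) z + (z : ℂ) * deriv f z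
        + ((z : ℂ) ^ 2 - ν ^ 2) * f z = 0)
    (w : ℝ → ℂ)
    (hw : ∀ t : ℝ, w t = ((t : ℂ) ^ 2)⁻¹ * f ((1 / 2) * m₄ * t ^ 2)) :
    ∀ t > (0 : ℝ),
      deriv (deriv w) t + 5 * (t : ℂ)⁻¹ * deriv w t
        + (m₁ : ℂ) * ((t : ℂ) ^ 2)⁻¹ * w t
        + (m₄ : ℂ) ^ 2 * (t : ℂ) ^ 2 * w t = 0 := by
  intro t ht
  obtain rfl : w = _ := funext hw
  have hz : ∀ s ≠ 0, 0 < 1 / 2 * m₄ * s ^ 2 := fun s hs => by positivity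
  have hF : ∀ᶠ s in 𝓝 t, HasDerivAt (fun s => f (1 / 2 * m₄ * s ^ 2))
      ((m₄ * s : ℝ) • deriv f (1 / 2 * m₄ * s ^ 2)) s := by
    filter_upwards [eventually_ne_nhds ht.ne'] with s hs
    exact hasDerivAt_comp_half_mul_sq (hf _ (hz s hs)).hasDerivAt
  have hF' := ((hasDerivAt_id' t).const_mul m₄).smul
    (hasDerivAt_comp_half_mul_sq (hf' _ (hz t ht.ne')).hasDerivAt)
  rw [deriv_deriv_inv_sq_mul_add ht.ne' hF hF']
  have hB := hBessel _ (hz t ht.ne')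
  have ht' : (t : ℂ) ≠ 0 := Complex.ofReal_ne_zero.mpr ht.ne'
  simp only [Complex.real_smul]
  push_cast at hB ⊢
  generalize f (1 / 2 * m₄ * t ^ 2) = F at hB ⊢
  generalize deriv f (1 / 2 * m₄ * t ^ 2) = F' at hB ⊢
  generalize deriv (deriv f) (1 / 2 * m₄ * t ^ 2) = F'' at hB ⊢
  field_simp
  linear_combination (4 : ℂ) * hB + 4 * F * hν

/-- If `f` solves the Bessel equation of order `ν` with
`ν² = -(1/4)(m₁-4)` on `(0,∞)`, then `w t = t⁻² f((1/2) m₄ t²)` solves the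
temporal eigenfunction equation
`w'' + 5 t⁻¹ w' + m₁ t⁻² w + m₄² t² w = 0` on `(0,∞)`. -/
theorem temporal_eigenfunction_of_bessel_m2_zero_m3_pos
    (m₁ m₄ : ℝ) (hm₁ : 32 / 3 ≤ m₁) (hm₄ : 0 < m₄)
    (ν : ℂ) (hν : ν ^ 2 = -(1 / 4) * ((m₁ : ℂ) - 4))
    (f : ℝ → ℂ)
    (hf : ∀ z > (0 : ℝ), DifferentiableAt ℝ f z)
    (hf' : ∀ z > (0 : ℝ), DifferentiableAt ℝ (deriv f) z)
    (hBessel : ∀ z > (0 : ℝ),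
      (z : ℂ) ^ 2 * deriv (deriv f) z + (z : ℂ) * deriv f z
        + ((z : ℂ) ^ 2 - ν ^ 2) * f z = 0)
    (w : ℝ → ℂ)
    (hw : ∀ t : ℝ, w t = ((t : ℂ) ^ 2)⁻¹ * f ((1 / 2) * m₄ * t ^ 2)) :
    ∀ t > (0 : ℝ),
      deriv (deriv w) t + 5 * (t : ℂ)⁻¹ * deriv w t
        + (m₁ : ℂ) * ((t : ℂ) ^ 2)⁻¹ * w t
        + (m₄ : ℂ) ^ 2 * (t : ℂ) ^ 2 * w t = 0 :=
  temporal_eigenfunction_of_bessel_m2_zero_m3_pos_general m₁ m₄ hm₄ ν hν f hf hf' hBessel w hw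
end

section
/- Let m₁ ≥ 32/3 and m₂ > 0 be real constants and let w : (0,∞) → ℂ be twice continuously differentiable and satisfy w''(t) + 5 t⁻¹ w'(t) + m₁ t⁻² w(t) + m₂² t^(−2/3) w(t) = 0 for all t > 0. Then w(t) → 0 as t → ∞; and if w is not identically zero, then w is unbounded on (0,ε) for every ε > 0 (so the solutions diverge as t tends to zero). -/
/-!
With `v = t ^ (5/2) • w` the equation becomes `v'' + Q v = 0` for the potential
`Q t = (m₁ - 15/4) / t ^ 2 + m₂ ^ 2 * t ^ (-2/3)`, which is positive and decreasing, so the energy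
`‖v'‖ ^ 2 + Q ‖v‖ ^ 2` is nonincreasing. For large `t` it dominates `(m₁ - 15/4) ‖v‖ ^ 2 / t ^ 2`,
whence `‖w t‖ = O(t ^ (-3/2))`. If `w` were bounded near `0`, then `v = O(t ^ 2)` and
`v'' = -Q v = O(1)`, which forces `v' = O(t)`; so the energy tends to `0` at `0⁺`, monotonicity
makes it nonpositive, and `v` vanishes wherever `Q > 0`, i.e. everywhere.
-/

open Set Filter Topology

namespace TemporalEigenfunction

section Energy

variable {E : Type*} [NormedAddCommGroup E]

def energy (v v' : ℝ → E) (Q : ℝ → ℝ) (t : ℝ) : ℝ := ‖v' t‖ ^ 2 + Q t * ‖v t‖ ^ 2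

variable {v v' : ℝ → E} {Q : ℝ → ℝ}

theorem energy_nonpos_of_tendsto (hE : AntitoneOn (energy v v' Q) (Ioi 0))
    (h0 : Tendsto (energy v v' Q) (𝓝[>] 0) (𝓝 0)) {t : ℝ} (ht : 0 < t) :
    energy v v' Q t ≤ 0 := by
  refine ge_of_tendsto h0 ?_
  filter_upwards [Ioo_mem_nhdsGT ht] with s hs
  exact hE hs.1 ht hs.2.le

theorem eq_zero_of_tendsto_energy (hE : AntitoneOn (energy v v' Q) (Ioi 0))
    (h0 : Tendsto (energy v v' Q) (𝓝[>] 0) (𝓝 0)) {t : ℝ} (ht : 0 < t) (hQ : 0 < Q t) :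
    v t = 0 := by
  have hEt := energy_nonpos_of_tendsto hE h0 ht
  rw [energy] at hEt
  have : ‖v t‖ ^ 2 ≤ 0 := nonpos_of_mul_nonpos_right (by nlinarith [sq_nonneg ‖v' t‖]) hQ
  simpa using this

theorem norm_le_of_antitoneOn_energy (hE : AntitoneOn (energy v v' Q) (Ioi 0)) {A t : ℝ}
    (hA : 0 < A) (ht : 1 ≤ t) (hQ : A / t ^ 2 ≤ Q t) :
    ‖v t‖ ≤ √(energy v v' Q 1 / A) * t := by
  have ht0 : 0 < t := one_pos.trans_le ht
  have hEt : A / t ^ 2 * ‖v t‖ ^ 2 ≤ energy v v' Q 1 :=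
    calc A / t ^ 2 * ‖v t‖ ^ 2 ≤ energy v v' Q t := by
          rw [energy]; nlinarith [sq_nonneg ‖v' t‖, sq_nonneg ‖v t‖]
      _ ≤ energy v v' Q 1 := hE (mem_Ioi.2 one_pos) (mem_Ioi.2 ht0) ht
  have hsq : ‖v t‖ ^ 2 ≤ energy v v' Q 1 / A * t ^ 2 := by
    field_simp at hEt
    rw [div_mul_eq_mul_div, le_div_iff₀ hA]
    linarith
  calc ‖v t‖ ≤ √(energy v v' Q 1 / A * t ^ 2) :=
        (Real.le_sqrt (norm_nonneg _) ((sq_nonneg _).trans hsq)).2 hsq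
    _ = √(energy v v' Q 1 / A) * t := by rw [Real.sqrt_mul' _ (sq_nonneg t), Real.sqrt_sq ht0.le]

variable [InnerProductSpace ℝ E]

theorem hasDerivAt_energy {t q' : ℝ} (hv : HasDerivAt v (v' t) t)
    (hv' : HasDerivAt v' (-Q t • v t) t) (hQ : HasDerivAt Q q' t) :
    HasDerivAt (energy v v' Q) (q' * ‖v t‖ ^ 2) t := by
  refine (hv'.norm_sq.add (hQ.mul hv.norm_sq)).congr_deriv ?_
  rw [inner_smul_right, real_inner_comm]
  ring

theorem antitoneOn_energy
    (hv : ∀ t > 0, HasDerivAt v (v' t) t) (hv' : ∀ t > 0, HasDerivAt v' (-Q t • v t) t)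
    (hQ : ∀ t > 0, DifferentiableAt ℝ Q t) (hQ' : ∀ t > 0, deriv Q t ≤ 0) :
    AntitoneOn (energy v v' Q) (Ioi 0) := by
  have hE (t : ℝ) (ht : 0 < t) := hasDerivAt_energy (hv t ht) (hv' t ht) (hQ t ht).hasDerivAt
  refine antitoneOn_of_hasDerivWithinAt_nonpos (f' := fun t ↦ deriv Q t * ‖v t‖ ^ 2) (convex_Ioi 0)
    (fun t ht ↦ (hE t ht).continuousAt.continuousWithinAt) ?_ ?_ <;> rw [interior_Ioi]
  · exact fun t ht ↦ (hE t ht).hasDerivWithinAt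
  · exact fun t ht ↦ mul_nonpos_of_nonpos_of_nonneg (hQ' t ht) (sq_nonneg _)

end Energy

section NormedSpace

variable {E : Type*} [NormedAddCommGroup E] [NormedSpace ℝ E]

theorem hasDerivAt_rpow_smul {w : ℝ → E} {w' : E} {p t : ℝ} (ht : 0 < t)
    (hw : HasDerivAt w w' t) :
    HasDerivAt (fun s ↦ s ^ p • w s) ((p * t ^ (p - 1)) • w t + t ^ p • w') t :=
  ((Real.hasDerivAt_rpow_const (Or.inl ht.ne')).smul hw).congr_deriv (add_comm _ _)

/-- The substitution `v = t ^ p • w` removes the first-order term of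
`w'' + (2 p / t) w' + q w = 0`, leaving `v'' + (q - p (p - 1) / t ^ 2) v = 0`. -/
theorem hasDerivAt_liouville {w w' : ℝ → E} {q p t : ℝ} (ht : 0 < t)
    (hw : HasDerivAt w (w' t) t) (hw' : HasDerivAt w' (-(2 * p / t) • w' t - q • w t) t) :
    HasDerivAt (fun s ↦ (p * s ^ (p - 1)) • w s + s ^ p • w' s)
      (-(q - p * (p - 1) / t ^ 2) • (t ^ p • w t)) t := by
  have h1 : HasDerivAt (fun s ↦ p * s ^ (p - 1)) (p * ((p - 1) * t ^ (p - 1 - 1))) t :=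
    (Real.hasDerivAt_rpow_const (Or.inl ht.ne')).const_mul p
  refine ((h1.smul hw).add (hasDerivAt_rpow_smul ht hw')).congr_deriv ?_
  have e1 : t ^ (p - 1) = t ^ p / t := Real.rpow_sub_one ht.ne' p
  have e2 : t ^ (p - 1 - 1) = t ^ p / t ^ 2 := by
    rw [Real.rpow_sub_one ht.ne', e1, div_div, sq]
  rw [e1, e2]
  module

theorem sub_mul_norm_deriv_le {f f' f'' : ℝ → E} {a b K : ℝ} (hab : a ≤ b)
    (hf : ∀ x ∈ Icc a b, HasDerivAt f (f' x) x) (hf' : ∀ x ∈ Icc a b, HasDerivAt f' (f'' x) x)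
    (hK : ∀ x ∈ Icc a b, ‖f'' x‖ ≤ K) :
    (b - a) * ‖f' b‖ ≤ ‖f b - f a‖ + K * (b - a) ^ 2 := by
  have hb : b ∈ Icc a b := right_mem_Icc.2 hab
  have hf'_near (x : ℝ) (hx : x ∈ Icc a b) : ‖f' x - f' b‖ ≤ K * (b - a) := by
    have := (convex_Icc a b).norm_image_sub_le_of_norm_hasDerivWithin_le
      (fun y hy ↦ (hf' y hy).hasDerivWithinAt) hK hb hx
    rw [Real.norm_eq_abs, abs_of_nonpos (by linarith [hx.2])] at this
    exact this.trans (mul_le_mul_of_nonneg_left (by linarith [hx.1])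
      ((norm_nonneg _).trans (hK b hb)))
  -- the mean value inequality for `f - x • f' b`, whose derivative is small
  have hg := (convex_Icc a b).norm_image_sub_le_of_norm_hasDerivWithin_le
    (f := fun x ↦ f x - x • f' b)
    (fun x hx ↦ ((hf x hx).sub ((hasDerivAt_id x).smul_const (f' b))).hasDerivWithinAt)
    (fun x hx ↦ by simpa using hf'_near x hx) (left_mem_Icc.2 hab) hb
  have hsplit : (b - a) • f' b = (f b - f a) - ((f b - b • f' b) - (f a - a • f' b)) := by
    rw [sub_smul]; abel
  calc (b - a) * ‖f' b‖ = ‖(b - a) • f' b‖ := by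
        rw [norm_smul, Real.norm_eq_abs, abs_of_nonneg (sub_nonneg.2 hab)]
    _ ≤ ‖f b - f a‖ + ‖(f b - b • f' b) - (f a - a • f' b)‖ := hsplit ▸ norm_sub_le _ _
    _ ≤ ‖f b - f a‖ + K * (b - a) ^ 2 := by
        rw [Real.norm_eq_abs, abs_of_nonneg (sub_nonneg.2 hab)] at hg
        linarith

theorem tendsto_energy_nhdsGT_zero {v v' : ℝ → E} {Q : ℝ → ℝ} {δ A M : ℝ} (hδ : 0 < δ)
    (hv : ∀ t ∈ Ioo 0 δ, HasDerivAt v (v' t) t)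
    (hv' : ∀ t ∈ Ioo 0 δ, HasDerivAt v' (-Q t • v t) t)
    (hQ : ∀ t ∈ Ioo 0 δ, |Q t| ≤ A / t ^ 2) (hvM : ∀ t ∈ Ioo 0 δ, ‖v t‖ ≤ M * t ^ 2) :
    Tendsto (energy v v' Q) (𝓝[>] 0) (𝓝 0) := by
  have hA (t : ℝ) (ht : t ∈ Ioo 0 δ) : 0 ≤ A / t ^ 2 := (abs_nonneg _).trans (hQ t ht)
  have hv'' (t : ℝ) (ht : t ∈ Ioo 0 δ) : ‖-Q t • v t‖ ≤ A * M := by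
    rw [norm_smul, norm_neg, Real.norm_eq_abs]
    calc |Q t| * ‖v t‖ ≤ A / t ^ 2 * (M * t ^ 2) :=
          mul_le_mul (hQ t ht) (hvM t ht) (norm_nonneg _) (hA t ht)
      _ = A * M := by field_simp [ht.1.ne']
  set C := (5 * M + A * M) / 2
  have hv't (t : ℝ) (ht : t ∈ Ioo 0 δ) : ‖v' t‖ ≤ C * t := by
    have hsub : Icc (t / 2) t ⊆ Ioo 0 δ := fun s hs ↦ ⟨by linarith [hs.1, ht.1], hs.2.trans_lt ht.2⟩
    have key := sub_mul_norm_deriv_le (by linarith [ht.1]) (fun s hs ↦ hv s (hsub hs))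
      (fun s hs ↦ hv' s (hsub hs)) (fun s hs ↦ hv'' s (hsub hs))
    have hdiff : ‖v t - v (t / 2)‖ ≤ M * t ^ 2 + M * (t / 2) ^ 2 :=
      (norm_sub_le _ _).trans
        (add_le_add (hvM t ht) (hvM _ (hsub (left_mem_Icc.2 (by linarith [ht.1])))))
    have h : t / 2 * ‖v' t‖ ≤ t / 2 * (C * t) := by
      rw [show t - t / 2 = t / 2 by ring] at key
      simp only [C]
      linarith
    exact le_of_mul_le_mul_left h (by linarith [ht.1])
  have hbound : ∀ᶠ t in 𝓝[>] 0, ‖energy v v' Q t‖ ≤ (C ^ 2 + A * M ^ 2) * t ^ 2 := by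
    filter_upwards [Ioo_mem_nhdsGT hδ] with t ht
    calc ‖energy v v' Q t‖ ≤ ‖v' t‖ ^ 2 + |Q t| * ‖v t‖ ^ 2 := by
          have := abs_add_le (‖v' t‖ ^ 2) (Q t * ‖v t‖ ^ 2)
          rwa [abs_mul, abs_of_nonneg (sq_nonneg ‖v' t‖), abs_of_nonneg (sq_nonneg ‖v t‖)] at this
      _ ≤ (C * t) ^ 2 + A / t ^ 2 * (M * t ^ 2) ^ 2 :=
          add_le_add (pow_le_pow_left₀ (norm_nonneg _) (hv't t ht) 2)
            (mul_le_mul (hQ t ht) (pow_le_pow_left₀ (norm_nonneg _) (hvM t ht) 2)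
              (sq_nonneg _) (hA t ht))
      _ = (C ^ 2 + A * M ^ 2) * t ^ 2 := by field_simp [ht.1.ne']
  refine squeeze_zero_norm' hbound ?_
  have : Tendsto (fun t : ℝ ↦ (C ^ 2 + A * M ^ 2) * t ^ 2) (𝓝 0) (𝓝 0) := by
    simpa using ((continuous_pow 2).const_mul _).tendsto (0 : ℝ)
  exact this.mono_left nhdsWithin_le_nhds

theorem tendsto_zero_of_norm_rpow_smul_le {w : ℝ → E} {p C : ℝ} (hp : 1 < p)
    (h : ∀ t ≥ 1, ‖t ^ p • w t‖ ≤ C * t) : Tendsto w atTop (𝓝 0) := by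
  refine squeeze_zero_norm' (a := fun t ↦ C * t ^ (-(p - 1))) ?_ ?_
  · filter_upwards [eventually_ge_atTop 1] with t ht
    have ht0 : 0 < t := one_pos.trans_le ht
    have htp : 0 < t ^ p := Real.rpow_pos_of_pos ht0 p
    have hwt := h t ht
    rw [norm_smul, Real.norm_eq_abs, abs_of_pos htp] at hwt
    rw [neg_sub, Real.rpow_sub ht0, Real.rpow_one, mul_div_assoc', le_div_iff₀ htp]
    linarith [mul_comm ‖w t‖ (t ^ p)]
  · have := (tendsto_rpow_neg_atTop (y := p - 1) (by linarith)).const_mul C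
    rwa [mul_zero] at this

theorem norm_rpow_smul_le_mul_sq {p t M : ℝ} {x : E} (hp : 2 ≤ p) (ht : 0 < t) (ht1 : t ≤ 1)
    (hx : ‖x‖ ≤ M) : ‖t ^ p • x‖ ≤ M * t ^ 2 := by
  have htp : t ^ p ≤ t ^ 2 := by
    rw [← Real.rpow_two]
    exact Real.rpow_le_rpow_of_exponent_ge ht ht1 hp
  rw [norm_smul, Real.norm_eq_abs, abs_of_pos (Real.rpow_pos_of_pos ht p), mul_comm]
  exact mul_le_mul hx htp (Real.rpow_nonneg ht.le p) ((norm_nonneg x).trans hx)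

end NormedSpace

section Potential

noncomputable def potential (a b t : ℝ) : ℝ := a / t ^ 2 + b * t ^ (-(2 : ℝ) / 3)

variable {a b t : ℝ}

theorem hasDerivAt_potential (ht : 0 < t) :
    HasDerivAt (potential a b)
      (-(2 * a / t ^ 3) + b * (-(2 : ℝ) / 3 * t ^ (-(2 : ℝ) / 3 - 1))) t := by
  have h1 := ((hasDerivAt_pow 2 t).inv (pow_ne_zero 2 ht.ne')).const_mul a
  have h2 := (Real.hasDerivAt_rpow_const (p := -(2 : ℝ) / 3) (Or.inl ht.ne')).const_mul b
  refine (h1.add h2).congr_deriv ?_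
  field_simp
  ring

theorem deriv_potential_nonpos (ha : 0 ≤ a) (hb : 0 ≤ b) (ht : 0 < t) :
    deriv (potential a b) t ≤ 0 := by
  rw [(hasDerivAt_potential ht).deriv]
  have : 0 ≤ t ^ (-(2 : ℝ) / 3 - 1) := by positivity
  have : 0 ≤ 2 * a / t ^ 3 := by positivity
  nlinarith

theorem div_sq_le_potential (hb : 0 ≤ b) (ht : 0 ≤ t) : a / t ^ 2 ≤ potential a b t :=
  le_add_of_nonneg_right (by positivity)

theorem potential_pos (ha : 0 < a) (hb : 0 ≤ b) (ht : 0 < t) : 0 < potential a b t :=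
  (div_pos ha (pow_pos ht 2)).trans_le (div_sq_le_potential hb ht.le)

theorem abs_potential_le (ha : 0 ≤ a) (hb : 0 ≤ b) (ht : 0 < t) (ht1 : t ≤ 1) :
    |potential a b t| ≤ (a + b) / t ^ 2 := by
  have hpow : t ^ (-(2 : ℝ) / 3) ≤ 1 / t ^ 2 := by
    rw [one_div, ← Real.rpow_two, ← Real.rpow_neg ht.le]
    exact Real.rpow_le_rpow_of_exponent_ge ht ht1 (by norm_num)
  rw [abs_of_nonneg ((div_nonneg ha (sq_nonneg t)).trans (div_sq_le_potential hb ht.le)),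
    potential, add_div]
  gcongr
  calc b * t ^ (-(2 : ℝ) / 3) ≤ b * (1 / t ^ 2) := by gcongr
    _ = b / t ^ 2 := by ring

theorem hasDerivAt_deriv_of_ode {m₁ m₂ : ℝ} {w : ℝ → ℂ} (hw' : DifferentiableAt ℝ (deriv w) t)
    (hODE : deriv (deriv w) t + 5 * (t : ℂ)⁻¹ * deriv w t + (m₁ : ℂ) * ((t : ℂ) ^ 2)⁻¹ * w t
        + (m₂ : ℂ) ^ 2 * ((t ^ (-(2 : ℝ) / 3) : ℝ) : ℂ) * w t = 0) :
    HasDerivAt (deriv w) (-(2 * (5 / 2) / t) • deriv w t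
      - (m₁ / t ^ 2 + m₂ ^ 2 * t ^ (-(2 : ℝ) / 3)) • w t) t := by
  refine hw'.hasDerivAt.congr_deriv ?_
  simp only [Complex.real_smul]
  push_cast
  linear_combination hODE

theorem hasDerivAt_liouville_of_ode {m₁ m₂ : ℝ} {w : ℝ → ℂ} (ht : 0 < t)
    (hw : DifferentiableAt ℝ w t) (hw' : DifferentiableAt ℝ (deriv w) t)
    (hODE : deriv (deriv w) t + 5 * (t : ℂ)⁻¹ * deriv w t + (m₁ : ℂ) * ((t : ℂ) ^ 2)⁻¹ * w t
        + (m₂ : ℂ) ^ 2 * ((t ^ (-(2 : ℝ) / 3) : ℝ) : ℂ) * w t = 0) :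
    HasDerivAt (fun s ↦ (5 / 2 * s ^ ((5 / 2 : ℝ) - 1)) • w s + s ^ (5 / 2 : ℝ) • deriv w s)
      (-potential (m₁ - 15 / 4) (m₂ ^ 2) t • (t ^ (5 / 2 : ℝ) • w t)) t := by
  refine (hasDerivAt_liouville ht hw.hasDerivAt (hasDerivAt_deriv_of_ode hw' hODE)).congr_deriv ?_
  rw [potential]
  ring_nf

end Potential

end TemporalEigenfunction

open TemporalEigenfunction

theorem temporal_eigenfunction_asymptotics_m3_zero_general
    (m₁ m₂ : ℝ) (hm₁ : 32 / 3 ≤ m₁)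
    (w : ℝ → ℂ)
    (hw : ∀ t > (0 : ℝ), DifferentiableAt ℝ w t)
    (hw' : ∀ t > (0 : ℝ), DifferentiableAt ℝ (deriv w) t)
    (hODE : ∀ t > (0 : ℝ),
      deriv (deriv w) t + 5 * (t : ℂ)⁻¹ * deriv w t
        + (m₁ : ℂ) * ((t : ℂ) ^ 2)⁻¹ * w t
        + (m₂ : ℂ) ^ 2 * ((t ^ (-(2 : ℝ) / 3) : ℝ) : ℂ) * w t = 0) :
    Filter.Tendsto w Filter.atTop (nhds 0) ∧
    ((∃ t > (0 : ℝ), w t ≠ 0) →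
      ∀ ε > (0 : ℝ), ¬ BddAbove ((fun t => ‖w t‖) '' Set.Ioo 0 ε)) := by
  have ha : 0 < m₁ - 15 / 4 := by linarith
  set Q := potential (m₁ - 15 / 4) (m₂ ^ 2)
  set v : ℝ → ℂ := fun t ↦ t ^ (5 / 2 : ℝ) • w t
  set v' : ℝ → ℂ := fun t ↦ (5 / 2 * t ^ ((5 / 2 : ℝ) - 1)) • w t + t ^ (5 / 2 : ℝ) • deriv w t
  have hv (t : ℝ) (ht : 0 < t) : HasDerivAt v (v' t) t :=
    hasDerivAt_rpow_smul ht (hw t ht).hasDerivAt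
  have hv' (t : ℝ) (ht : 0 < t) : HasDerivAt v' (-Q t • v t) t :=
    hasDerivAt_liouville_of_ode ht (hw t ht) (hw' t ht) (hODE t ht)
  have hE : AntitoneOn (energy v v' Q) (Ioi 0) := antitoneOn_energy hv hv'
    (fun t ht ↦ (hasDerivAt_potential ht).differentiableAt)
    (fun t ht ↦ deriv_potential_nonpos ha.le (sq_nonneg m₂) ht)
  refine ⟨tendsto_zero_of_norm_rpow_smul_le (by norm_num) fun t ht ↦
    norm_le_of_antitoneOn_energy hE ha ht (div_sq_le_potential (sq_nonneg m₂) (by linarith)), ?_⟩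
  rintro ⟨T, hT, hwT⟩ ε hε ⟨M, hM⟩
  have h0 : Tendsto (energy v v' Q) (𝓝[>] 0) (𝓝 0) :=
    tendsto_energy_nhdsGT_zero (δ := min ε 1) (lt_min hε one_pos) (fun t ht ↦ hv t ht.1)
      (fun t ht ↦ hv' t ht.1)
      (fun t ht ↦ abs_potential_le ha.le (sq_nonneg m₂) ht.1 (ht.2.le.trans (min_le_right _ _)))
      (fun t ht ↦ norm_rpow_smul_le_mul_sq (by norm_num) ht.1 (ht.2.le.trans (min_le_right _ _))
        (hM ⟨t, ⟨ht.1, ht.2.trans_le (min_le_left _ _)⟩, rfl⟩))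
  have hvT : v T = 0 := eq_zero_of_tendsto_energy hE h0 hT (potential_pos ha (sq_nonneg m₂) hT)
  exact hwT ((smul_eq_zero_iff_right (Real.rpow_pos_of_pos hT _).ne').1 hvT)

/-- Any twice continuously differentiable solution of
`w'' + 5 t⁻¹ w' + m₁ t⁻² w + m₂² t^(-2/3) w = 0` on `(0,∞)` (with `m₁ ≥ 32/3`,
`m₂ > 0`) converges to `0` as `t → ∞`, and, if it is not identically zero,
it is unbounded on `(0,ε)` for every `ε > 0`. -/
theorem temporal_eigenfunction_asymptotics_m3_zero
    (m₁ m₂ : ℝ) (hm₁ : 32 / 3 ≤ m₁) (hm₂ : 0 < m₂)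
    (w : ℝ → ℂ)
    (hw : ∀ t > (0 : ℝ), DifferentiableAt ℝ w t)
    (hw' : ∀ t > (0 : ℝ), DifferentiableAt ℝ (deriv w) t)
    (hw'' : ContinuousOn (deriv (deriv w)) (Set.Ioi 0))
    (hODE : ∀ t > (0 : ℝ),
      deriv (deriv w) t + 5 * (t : ℂ)⁻¹ * deriv w t
        + (m₁ : ℂ) * ((t : ℂ) ^ 2)⁻¹ * w t
        + (m₂ : ℂ) ^ 2 * ((t ^ (-(2 : ℝ) / 3) : ℝ) : ℂ) * w t = 0) :
    Filter.Tendsto w Filter.atTop (nhds 0) ∧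
    ((∃ t > (0 : ℝ), w t ≠ 0) →
      ∀ ε > (0 : ℝ), ¬ BddAbove ((fun t => ‖w t‖) '' Set.Ioo 0 ε)) :=
  temporal_eigenfunction_asymptotics_m3_zero_general m₁ m₂ hm₁ w hw hw' hODE
end

section
/- (Iwasawa decomposition of SL(n,ℝ)): Let n ≥ 1 and let g be a real n×n matrix with det g = 1. Then there exist unique matrices N, A, K such that g = N·A·K, where N is upper triangular with all diagonal entries equal to 1, A is a diagonal matrix with strictly positive diagonal entries and det A = 1, and K is orthogonal (Kᵀ·K = 1) with det K = 1. -/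
/-!
The decomposition `g = N A K` amounts to `(N A)⁻¹ g` being orthogonal, i.e. to
`N⁻¹ (g gᵀ) N⁻ᵀ = A²`. Such an upper unitriangular `N` and positive diagonal `A²` are given by
the LDL decomposition of the positive definite matrix `g gᵀ`, taken for the reversed order of
the indices. Then `det A > 0` and `det K = ±1` multiply to `det g = 1`, so both are `1`.

For uniqueness, if `B₁ K₁ = B₂ K₂` with `Bᵢ = Nᵢ Aᵢ`, then `B₂⁻¹ B₁ = K₂ K₁ᵀ` is upper triangular
with positive diagonal and orthogonal. Its inverse is then its transpose, which is lower
triangular, so it is diagonal with each entry equal to its own inverse, i.e. it is `1`.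
-/

open scoped ComplexOrder

open Matrix InnerProductSpace

namespace LDL

variable {𝕜 : Type*} [RCLike 𝕜] {ι : Type*} [LinearOrder ι] [WellFoundedLT ι]
  [LocallyFiniteOrderBot ι] [Fintype ι] {S : Matrix ι ι 𝕜} (hS : S.PosDef)

theorem lowerInv_apply_self (i : ι) : lowerInv hS i i = 1 := by
  let := Sᵀ.toNormedAddCommGroup hS.transpose
  let := Sᵀ.toInnerProductSpace hS.transpose.posSemidef
  have h := congrArg (fun v => (Pi.basisFun 𝕜 ι).repr v i)
    (gramSchmidt_def'' 𝕜 (Pi.basisFun 𝕜 ι) i)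
  simp only [map_add, map_sum, _root_.map_smul, Finsupp.add_apply, Finsupp.smul_apply,
    Finset.sum_apply', Pi.basisFun_repr, Pi.basisFun_apply, Pi.single_eq_same,
    smul_eq_mul] at h
  rw [Finset.sum_eq_zero fun j hj => ?_, add_zero] at h
  · exact h.symm
  · have h0 := gramSchmidt_triangular (Finset.mem_Iio.mp hj) (Pi.basisFun 𝕜 ι)
    rw [Pi.basisFun_repr] at h0
    rw [h0, mul_zero]

theorem diag_posDef : (diag hS).PosDef := by
  rw [diag_eq_lowerInv_conj]
  exact hS.mul_mul_conjTranspose_same (vecMul_injective_of_invertible _)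

theorem diagEntries_pos (i : ι) : 0 < diagEntries hS i := by
  simpa [diag] using (diag_posDef hS).diag_pos (i := i)

end LDL

namespace Matrix

theorem PosDef.exists_unitriangular_conj_eq_diagonal {𝕜 : Type*} [RCLike 𝕜] {ι : Type*}
    [Fintype ι] [LinearOrder ι] [LocallyFiniteOrderTop ι] {S : Matrix ι ι 𝕜} (hS : S.PosDef) :
    ∃ M : Matrix ι ι 𝕜, M.IsUpperTriangular ∧ (∀ i, M i i = 1) ∧
      ∃ d : ι → 𝕜, (∀ i, 0 < d i) ∧ M * S * Mᴴ = diagonal d := by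
  -- Lower triangular for the reversed order on `ι` means upper triangular.
  let S' : Matrix ιᵒᵈ ιᵒᵈ 𝕜 := S
  have hS' : S'.PosDef := hS
  let M : Matrix ιᵒᵈ ιᵒᵈ 𝕜 := LDL.lowerInv hS'
  let d : ιᵒᵈ → 𝕜 := LDL.diagEntries hS'
  exact ⟨M, fun _ _ h => LDL.lowerInv_triangular hS' h, LDL.lowerInv_apply_self hS', d,
    LDL.diagEntries_pos hS', (LDL.diag_eq_lowerInv_conj hS').symm⟩

section UpperTriangular

variable {ι R : Type*} [Fintype ι] [LinearOrder ι]

theorem IsUpperTriangular.mul_apply_self [NonUnitalNonAssocSemiring R] {P Q : Matrix ι ι R}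
    (hP : P.IsUpperTriangular) (hQ : Q.IsUpperTriangular) (i : ι) :
    (P * Q) i i = P i i * Q i i := by
  rw [mul_apply]
  refine Finset.sum_eq_single i (fun k _ hk => ?_) (by simp)
  rcases hk.lt_or_gt with h | h
  · rw [hP h, zero_mul]
  · rw [hQ h, mul_zero]

theorem IsUpperTriangular.inv_apply_self [Field R] {M : Matrix ι ι R} [Invertible M]
    (hM : M.IsUpperTriangular) (i : ι) : M⁻¹ i i = (M i i)⁻¹ := by
  refine eq_inv_of_mul_eq_one_right (a := M i i) ?_
  rw [← hM.mul_apply_self (blockTriangular_inv_of_blockTriangular hM), mul_inv_of_invertible,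
    one_apply_eq]

theorem IsUpperTriangular.det_eq_one [CommRing R] {M : Matrix ι ι R}
    (hM : M.IsUpperTriangular) (hM₁ : ∀ i, M i i = 1) : M.det = 1 := by
  simp [det_of_isUpperTriangular hM, hM₁]

theorem IsUpperTriangular.eq_one_of_transpose_mul_self [Field R] [LinearOrder R]
    [IsStrictOrderedRing R] {U : Matrix ι ι R} (hU : U.IsUpperTriangular)
    (hpos : ∀ i, 0 < U i i) (hUU : Uᵀ * U = 1) : U = 1 := by
  let _ : Invertible U := invertibleOfLeftInverse U Uᵀ hUU
  have hinv : U⁻¹ = Uᵀ := inv_eq_left_inv hUU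
  -- `Uᵀ = U⁻¹` is both lower and upper triangular.
  have hinvU : U⁻¹.IsUpperTriangular := blockTriangular_inv_of_blockTriangular hU
  ext i j
  rcases lt_trichotomy i j with h | rfl | h
  · simpa [hinv, one_apply_ne h.ne] using hinvU h
  · have hii : U i i = (U i i)⁻¹ := by rw [← hU.inv_apply_self, hinv, transpose_apply]
    have hsq : U i i * U i i = 1 := by
      nth_rw 2 [hii]; exact mul_inv_cancel₀ (hpos i).ne'
    rw [one_apply_eq]
    nlinarith [hpos i]
  · rw [hU h, one_apply_ne h.ne']

end UpperTriangular

theorem eq_and_eq_of_unitriangular_mul_isDiag_eq {ι R : Type*} [Fintype ι] [Field R]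
    {N₁ N₂ A₁ A₂ : Matrix ι ι R}
    (hN₁ : ∀ i, N₁ i i = 1) (hN₂ : ∀ i, N₂ i i = 1) (hA₁ : A₁.IsDiag) (hA₂ : A₂.IsDiag)
    (hA₁ne : ∀ i, A₁ i i ≠ 0) (h : N₁ * A₁ = N₂ * A₂) : N₁ = N₂ ∧ A₁ = A₂ := by
  classical
  rw [← hA₁.diagonal_diag, ← hA₂.diagonal_diag] at h ⊢
  have hentry (i j : ι) : N₁ i j * A₁ j j = N₂ i j * A₂ j j := by
    simpa only [mul_diagonal, diag_apply] using congrFun (congrFun h i) j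
  have hdiag (i : ι) : A₁ i i = A₂ i i := by simpa [hN₁, hN₂] using hentry i i
  refine ⟨ext fun i j => mul_right_cancel₀ (hA₁ne j) ?_, congrArg diagonal (funext hdiag)⟩
  rw [hentry, hdiag]

section OrderedField

variable {ι R : Type*} [Fintype ι] [LinearOrder ι] [Field R] [LinearOrder R]
  [IsStrictOrderedRing R]

theorem IsUpperTriangular.eq_and_eq_of_mul_eq_mul_of_orthogonal {B₁ B₂ K₁ K₂ : Matrix ι ι R}
    (hB₁ : B₁.IsUpperTriangular) (hB₁pos : ∀ i, 0 < B₁ i i)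
    (hB₂ : B₂.IsUpperTriangular) (hB₂pos : ∀ i, 0 < B₂ i i)
    (hK₁ : K₁ᵀ * K₁ = 1) (hK₂ : K₂ᵀ * K₂ = 1) (h : B₁ * K₁ = B₂ * K₂) :
    B₁ = B₂ ∧ K₁ = K₂ := by
  have hdet : ∀ {B : Matrix ι ι R}, B.IsUpperTriangular → (∀ i, 0 < B i i) → IsUnit B.det :=
    fun hB hpos => by
      rw [det_of_isUpperTriangular hB]
      exact (Finset.prod_pos fun i _ => hpos i).ne'.isUnit
  let _ := invertibleOfIsUnitDet B₁ (hdet hB₁ hB₁pos)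
  let _ := invertibleOfIsUnitDet B₂ (hdet hB₂ hB₂pos)
  have hB₂inv : B₂⁻¹.IsUpperTriangular := blockTriangular_inv_of_blockTriangular hB₂
  have hUK : B₂⁻¹ * B₁ = K₂ * K₁ᵀ := by
    rw [inv_mul_eq_iff_eq_mul_of_invertible, ← Matrix.mul_assoc, ← h, Matrix.mul_assoc,
      mul_eq_one_comm.mp hK₁, Matrix.mul_one]
  have hU1 : B₂⁻¹ * B₁ = 1 := by
    refine IsUpperTriangular.eq_one_of_transpose_mul_self (hB₂inv.mul hB₁) (fun i => ?_) ?_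
    · rw [hB₂inv.mul_apply_self hB₁, hB₂.inv_apply_self]
      exact mul_pos (inv_pos.mpr (hB₂pos i)) (hB₁pos i)
    · rw [hUK, transpose_mul, transpose_transpose, Matrix.mul_assoc, ← Matrix.mul_assoc K₂ᵀ,
        hK₂, Matrix.one_mul, mul_eq_one_comm.mp hK₁]
  have hB : B₁ = B₂ := by
    rwa [inv_mul_eq_iff_eq_mul_of_invertible, Matrix.mul_one] at hU1
  subst hB
  exact ⟨rfl, (mul_right_injective_of_invertible B₁ h)⟩

theorem eq_of_unitriangular_mul_isDiag_mul_orthogonal_eq {N₁ N₂ A₁ A₂ K₁ K₂ : Matrix ι ι R}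
    (hN₁ : N₁.IsUpperTriangular) (hN₁₁ : ∀ i, N₁ i i = 1) (hA₁ : A₁.IsDiag)
    (hA₁pos : ∀ i, 0 < A₁ i i) (hK₁ : K₁ᵀ * K₁ = 1)
    (hN₂ : N₂.IsUpperTriangular) (hN₂₁ : ∀ i, N₂ i i = 1) (hA₂ : A₂.IsDiag)
    (hA₂pos : ∀ i, 0 < A₂ i i) (hK₂ : K₂ᵀ * K₂ = 1)
    (h : N₁ * A₁ * K₁ = N₂ * A₂ * K₂) : N₁ = N₂ ∧ A₁ = A₂ ∧ K₁ = K₂ := by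
  have hNA {N A : Matrix ι ι R} (hN : N.IsUpperTriangular) (hN₁ : ∀ i, N i i = 1)
      (hA : A.IsDiag) (hApos : ∀ i, 0 < A i i) :
      (N * A).IsUpperTriangular ∧ ∀ i, 0 < (N * A) i i := by
    have hAup : A.IsUpperTriangular := fun _ _ hij => hA hij.ne'
    refine ⟨hN.mul hAup, fun i => ?_⟩
    rw [hN.mul_apply_self hAup, hN₁, one_mul]
    exact hApos i
  obtain ⟨hB₁, hB₁pos⟩ := hNA hN₁ hN₁₁ hA₁ hA₁pos
  obtain ⟨hB₂, hB₂pos⟩ := hNA hN₂ hN₂₁ hA₂ hA₂pos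
  obtain ⟨hB, rfl⟩ :=
    IsUpperTriangular.eq_and_eq_of_mul_eq_mul_of_orthogonal hB₁ hB₁pos hB₂ hB₂pos hK₁ hK₂ h
  obtain ⟨rfl, rfl⟩ :=
    eq_and_eq_of_unitriangular_mul_isDiag_eq hN₁₁ hN₂₁ hA₁ hA₂ (fun i => (hA₁pos i).ne') hB
  exact ⟨rfl, rfl, rfl⟩

end OrderedField

theorem exists_unitriangular_mul_diagonal_mul_orthogonal {ι : Type*} [Fintype ι]
    [LinearOrder ι] [LocallyFiniteOrderTop ι] {g : Matrix ι ι ℝ} (hg : IsUnit g) :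
    ∃ N : Matrix ι ι ℝ, N.IsUpperTriangular ∧ (∀ i, N i i = 1) ∧
      ∃ a : ι → ℝ, (∀ i, 0 < a i) ∧ ∃ K : Matrix ι ι ℝ, Kᵀ * K = 1 ∧ g = N * diagonal a * K := by
  obtain ⟨M, hM, hM₁, d, hd, hMd⟩ := (PosDef.mul_conjTranspose_self g
    (vecMul_injective_of_isUnit hg)).exists_unitriangular_conj_eq_diagonal
  rw [conjTranspose_eq_transpose_of_trivial, conjTranspose_eq_transpose_of_trivial] at hMd
  let _ : Invertible M := invertibleOfIsUnitDet M (by rw [hM.det_eq_one hM₁]; exact isUnit_one)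
  have hsqrt (i : ι) : 0 < √(d i) := Real.sqrt_pos.2 (hd i)
  set E := diagonal fun i => (√(d i))⁻¹
  refine ⟨M⁻¹, blockTriangular_inv_of_blockTriangular hM,
    fun i => by rw [hM.inv_apply_self, hM₁, inv_one], fun i => √(d i), hsqrt, E * M * g, ?_, ?_⟩
  · rw [mul_eq_one_comm]
    calc E * M * g * (E * M * g)ᵀ = E * (M * (g * gᵀ) * Mᵀ) * E := by
          simp only [E, transpose_mul, diagonal_transpose, Matrix.mul_assoc]
      _ = 1 := by
          rw [hMd, diagonal_mul_diagonal, diagonal_mul_diagonal, ← diagonal_one]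
          congr 1
          funext i
          have := hsqrt i
          field_simp
          exact (Real.sq_sqrt (hd i).le).symm
  · rw [← Matrix.mul_assoc, ← Matrix.mul_assoc, Matrix.mul_assoc M⁻¹, diagonal_mul_diagonal]
    simp only [mul_inv_cancel₀ (hsqrt _).ne', diagonal_one, Matrix.mul_one,
      inv_mul_of_invertible, Matrix.one_mul]

end Matrix

open Matrix Finset

theorem iwasawa_decomposition_SL_general
    (n : ℕ)
    (g : Matrix (Fin n) (Fin n) ℝ) (hg : g.det = 1) :
    ∃! NAK : Matrix (Fin n) (Fin n) ℝ × Matrix (Fin n) (Fin n) ℝ ×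
        Matrix (Fin n) (Fin n) ℝ,
      (∀ i j : Fin n, j < i → NAK.1 i j = 0) ∧
      (∀ i : Fin n, NAK.1 i i = 1) ∧
      (∀ i j : Fin n, i ≠ j → NAK.2.1 i j = 0) ∧
      (∀ i : Fin n, 0 < NAK.2.1 i i) ∧
      NAK.2.1.det = 1 ∧
      Matrix.transpose NAK.2.2 * NAK.2.2 = 1 ∧
      NAK.2.2.det = 1 ∧
      g = NAK.1 * NAK.2.1 * NAK.2.2 := by
  have hgu : IsUnit g := (isUnit_iff_isUnit_det g).2 (hg ▸ isUnit_one)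
  obtain ⟨N, hN, hN₁, a, ha, K, hK, rfl⟩ := exists_unitriangular_mul_diagonal_mul_orthogonal hgu
  have hdetA : 0 < (diagonal a).det := by
    rw [det_diagonal]
    exact prod_pos fun i _ => ha i
  have hdetK : K.det * K.det = 1 := by simpa using congrArg det hK
  have hdetAK : (diagonal a).det * K.det = 1 := by simpa [hN.det_eq_one hN₁] using hg
  have hK₁ : K.det = 1 := by nlinarith
  have hA₁ : (diagonal a).det = 1 := by rwa [hK₁, mul_one] at hdetAK
  refine ⟨(N, diagonal a, K), ⟨hN, hN₁, fun i j h => diagonal_apply_ne a h, by simpa using ha,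
    hA₁, hK, hK₁, rfl⟩, ?_⟩
  rintro ⟨N', A', K'⟩ ⟨hN', hN'₁, hA', hA'pos, -, hK', -, h⟩
  obtain ⟨rfl, rfl, rfl⟩ := eq_of_unitriangular_mul_isDiag_mul_orthogonal_eq hN' hN'₁ hA' hA'pos
    hK' hN hN₁ (isDiag_diagonal a) (by simpa using ha) hK h.symm
  rfl

/-- Iwasawa decomposition of SL(n,ℝ): every real `n×n` matrix `g`
with `det g = 1` can be written in exactly one way as `g = N * A * K` with `N`
unit upper triangular, `A` diagonal with strictly positive diagonal entries and
`det A = 1`, and `K ∈ SO(n)`. -/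
theorem iwasawa_decomposition_SL
    (n : ℕ) (hn : 1 ≤ n)
    (g : Matrix (Fin n) (Fin n) ℝ) (hg : g.det = 1) :
    ∃! NAK : Matrix (Fin n) (Fin n) ℝ × Matrix (Fin n) (Fin n) ℝ ×
        Matrix (Fin n) (Fin n) ℝ,
      (∀ i j : Fin n, j < i → NAK.1 i j = 0) ∧
      (∀ i : Fin n, NAK.1 i i = 1) ∧
      (∀ i j : Fin n, i ≠ j → NAK.2.1 i j = 0) ∧
      (∀ i : Fin n, 0 < NAK.2.1 i i) ∧
      NAK.2.1.det = 1 ∧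
      Matrix.transpose NAK.2.2 * NAK.2.2 = 1 ∧
      NAK.2.2.det = 1 ∧
      g = NAK.1 * NAK.2.1 * NAK.2.2 :=
  iwasawa_decomposition_SL_general n g hg
end

section
/- (Signature of the DeWitt metric): Let n ≥ 2 and let g be a positive definite symmetric real n×n matrix. Define the DeWitt bilinear form on symmetric real n×n matrices by G(h,k) := tr(g⁻¹·h·g⁻¹·k) − tr(g⁻¹·h)·tr(g⁻¹·k). Then: (i) G is positive definite on the subspace {h symmetric : tr(g⁻¹·h) = 0}, i.e. G(h,h) > 0 for every nonzero symmetric h with tr(g⁻¹h) = 0; (ii) G(g,g) = n − n² < 0; and (iii) G(g,h) = 0 for every symmetric h with tr(g⁻¹h) = 0. In particular, G is a nondegenerate form of Lorentzian signature on the n(n+1)/2-dimensional space of symmetric matrices. -/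
/-!
Write `g⁻¹ = yᵀ y` with `y` invertible. For `h` with `tr(g⁻¹h) = 0` the DeWitt form reduces to
`tr(g⁻¹hg⁻¹h) = tr(X Xᵀ)` with `X = y h yᵀ`, a sum of squares that vanishes only when `h = 0`.
Since `g⁻¹g = 1`, `G(g, k) = (1 - n) tr(g⁻¹k)`, which gives both `G(g, g) = n - n²` and the
`G`-orthogonality of `g` to the `g`-trace-free matrices.
-/

open Matrix
open scoped MatrixOrder

variable {ι : Type*} [Fintype ι] [DecidableEq ι]

theorem Matrix.PosDef.trace_mul_mul_mul_pos_of_isSymm {P h : Matrix ι ι ℝ} (hP : P.PosDef)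
    (hh : h.IsSymm) (h0 : h ≠ 0) : 0 < (P * h * P * h).trace := by
  obtain ⟨y, hy, rfl⟩ :=
    CStarAlgebra.isStrictlyPositive_iff_eq_star_mul_self.mp hP.isStrictlyPositive
  rw [star_eq_conjTranspose, conjTranspose_eq_transpose_of_trivial]
  set X := y * h * yᵀ
  have htrace : (yᵀ * y * h * (yᵀ * y) * h).trace = (X * Xᴴ).trace := by
    rw [conjTranspose_eq_transpose_of_trivial, transpose_mul, transpose_mul, transpose_transpose,
      hh.eq]
    simp only [X, Matrix.mul_assoc]
    rw [Matrix.trace_mul_comm yᵀ]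
    simp only [Matrix.mul_assoc]
  have hX : X ≠ 0 := by
    rwa [Ne, ((isUnit_transpose y).mpr hy).mul_left_eq_zero, hy.mul_right_eq_zero]
  rw [htrace]
  exact (posSemidef_self_mul_conjTranspose X).trace_nonneg.lt_of_ne
    (Ne.symm (trace_mul_conjTranspose_self_eq_zero_iff.not.mpr hX))

noncomputable def deWittForm {R : Type*} [CommRing R] (g h k : Matrix ι ι R) : R :=
  (g⁻¹ * h * g⁻¹ * k).trace - (g⁻¹ * h).trace * (g⁻¹ * k).trace

theorem deWittForm_self_pos_of_trace_eq_zero {g h : Matrix ι ι ℝ} (hg : g.PosDef)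
    (hh : h.IsSymm) (h0 : h ≠ 0) (htr : (g⁻¹ * h).trace = 0) : 0 < deWittForm g h h := by
  rw [deWittForm, htr, zero_mul, sub_zero]
  exact hg.inv.trace_mul_mul_mul_pos_of_isSymm hh h0

theorem deWittForm_self_left {R : Type*} [CommRing R] {g : Matrix ι ι R} (hg : IsUnit g.det)
    (k : Matrix ι ι R) : deWittForm g g k = (1 - Fintype.card ι) * (g⁻¹ * k).trace := by
  rw [deWittForm, nonsing_inv_mul g hg, Matrix.one_mul, trace_one]
  ring

/-- Signature of the DeWitt metric: for a positive definite
symmetric `g`, the DeWitt form `G(h,k) = tr(g⁻¹hg⁻¹k) − tr(g⁻¹h)tr(g⁻¹k)` is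
positive definite on the trace-free (w.r.t. `g`) symmetric matrices, satisfies
`G(g,g) = n − n² < 0`, and `g` is `G`-orthogonal to every symmetric `h` with
`tr(g⁻¹h) = 0`. -/
theorem deWitt_metric_lorentzian_signature
    (n : ℕ) (hn : 2 ≤ n)
    (g : Matrix (Fin n) (Fin n) ℝ) (hg : g.PosDef)
    (G : Matrix (Fin n) (Fin n) ℝ → Matrix (Fin n) (Fin n) ℝ → ℝ)
    (hG : ∀ h k, G h k = (g⁻¹ * h * g⁻¹ * k).trace - (g⁻¹ * h).trace * (g⁻¹ * k).trace) :
    (∀ h : Matrix (Fin n) (Fin n) ℝ, h.IsSymm → h ≠ 0 → (g⁻¹ * h).trace = 0 →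
        0 < G h h) ∧
    (G g g = (n : ℝ) - (n : ℝ) ^ 2 ∧ G g g < 0) ∧
    (∀ h : Matrix (Fin n) (Fin n) ℝ, h.IsSymm → (g⁻¹ * h).trace = 0 →
        G g h = 0) := by
  obtain rfl : G = deWittForm g := funext₂ hG
  have hdet : IsUnit g.det := hg.isUnit.map detMonoidHom
  have hgg : deWittForm g g g = n - n ^ 2 := by
    rw [deWittForm_self_left hdet, nonsing_inv_mul g hdet, trace_one, Fintype.card_fin]
    ring
  have hn' : (2 : ℝ) ≤ n := by exact_mod_cast hn
  refine ⟨fun h hh h0 htr => deWittForm_self_pos_of_trace_eq_zero hg hh h0 htr,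
    ⟨hgg, by rw [hgg]; nlinarith⟩, fun h _ htr => ?_⟩
  rw [deWittForm_self_left hdet, htr, mul_zero]
end
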